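/- arXiv:2206.12899 — 2 statements merged into one kernel-verified Lean document; each statement's English description precedes it below -/
import Mathlib

section
/- Under the hypotheses: p_k ≥ 0 with Σ_k p_k = 1; local iterates satisfy v_k = w₀ - Σ_{t=1}^{E} η_t g_{k,t} with ‖g_{k,t}‖ ≤ G and η_t ≤ η₀ ≤ 2η for all t; v̄ = Σ_k p_k v_k; and w̄ = (1/K) Σ_{l=1}^K v_{i_l} where i_1,…,i_K are i.i.d. with P(i_l = k) = p_k. Then E‖w̄ - v̄‖² ≤ (4/K) η² E² G². -/
/-!
Write `u k = v k - v̄`, so that `∑ k, p k • u k = 0`. By independence the cross terms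
`⟪u (I l), u (I m)⟫`, `l ≠ m`, have mean `⟪𝔼 u (I l), 𝔼 u (I m)⟫ = 0`, hence
`𝔼 ‖∑ l, u (I l)‖² = K ∑ k, p k ‖u k‖²` and the sample mean deviates from `v̄` by
`K⁻¹ ∑ k, p k ‖v k - v̄‖²` in mean square. The weighted mean `v̄` minimises
`w ↦ ∑ k, p k ‖v k - w‖²`, so this is at most `K⁻¹ ∑ k, p k ‖v k - w₀‖²`, and each drift
`v k - w₀ = -∑ t, ηt t • g k t` has norm at most `Epochs * (2 η G)`.
-/

open MeasureTheory ProbabilityTheory Finset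

section NormedSpace

variable {ι E : Type*} [Fintype ι] [NormedAddCommGroup E] [NormedSpace ℝ E]

lemma sum_smul_sub_weighted_mean {p : ι → ℝ} (hsum : ∑ k, p k = 1) (v : ι → E) :
    ∑ k, p k • (v k - ∑ j, p j • v j) = 0 := by
  simp only [smul_sub, sum_sub_distrib, ← sum_smul, hsum, one_smul, sub_self]

lemma norm_sum_smul_le {a : ι → ℝ} {g : ι → E} {A G : ℝ} (ha : ∀ t, ‖a t‖ ≤ A)
    (hg : ∀ t, ‖g t‖ ≤ G) : ‖∑ t, a t • g t‖ ≤ Fintype.card ι * (A * G) := by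
  calc ‖∑ t, a t • g t‖ ≤ ∑ _t : ι, A * G :=
        norm_sum_le_of_le _ fun t _ => (norm_smul _ _).trans_le <|
          mul_le_mul (ha t) (hg t) (norm_nonneg _) ((norm_nonneg _).trans (ha t))
    _ = Fintype.card ι * (A * G) := by rw [sum_const, card_univ, nsmul_eq_mul]

lemma inv_natCast_smul_sum_sub {K : ℕ} (hK : 0 < K) (x : Fin K → E) (c : E) :
    (K : ℝ)⁻¹ • ∑ l, x l - c = (K : ℝ)⁻¹ • ∑ l, (x l - c) := by
  rw [sum_sub_distrib, smul_sub, sum_const, card_univ, Fintype.card_fin, ← Nat.cast_smul_eq_nsmul ℝ,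
    inv_smul_smul₀ (Nat.cast_ne_zero.mpr hK.ne')]

end NormedSpace

section InnerProductSpace

variable {ι E : Type*} [Fintype ι] [NormedAddCommGroup E] [InnerProductSpace ℝ E] {p : ι → ℝ}

lemma sum_mul_norm_sub_sq_eq (hsum : ∑ k, p k = 1) (v : ι → E) (w : E) :
    ∑ k, p k * ‖v k - w‖ ^ 2 =
      ∑ k, p k * ‖v k - ∑ j, p j • v j‖ ^ 2 + ‖∑ j, p j • v j - w‖ ^ 2 := by
  have hzero := sum_smul_sub_weighted_mean hsum v
  set m := ∑ j, p j • v j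
  have hcross : ∑ k, p k * inner ℝ (v k - m) (m - w) = 0 := by
    simp_rw [← real_inner_smul_left, ← sum_inner, hzero, inner_zero_left]
  calc ∑ k, p k * ‖v k - w‖ ^ 2
      = ∑ k, p k * (‖v k - m‖ ^ 2 + 2 * inner ℝ (v k - m) (m - w) + ‖m - w‖ ^ 2) := by
        simp_rw [← norm_add_sq_real, sub_add_sub_cancel]
    _ = ∑ k, p k * ‖v k - m‖ ^ 2 + ‖m - w‖ ^ 2 := by
        simp_rw [mul_add, sum_add_distrib, ← sum_mul, hsum, mul_left_comm _ (2 : ℝ), ← mul_sum,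
          hcross]
        ring

lemma sum_mul_norm_sub_weighted_mean_sq_le (hsum : ∑ k, p k = 1) (v : ι → E) (w : E) :
    ∑ k, p k * ‖v k - ∑ j, p j • v j‖ ^ 2 ≤ ∑ k, p k * ‖v k - w‖ ^ 2 := by
  rw [sum_mul_norm_sub_sq_eq hsum v w]
  exact le_add_of_nonneg_right (sq_nonneg _)

end InnerProductSpace

section Sampling

variable {Ω ι : Type*} [MeasurableSpace Ω] {P : Measure Ω} [IsFiniteMeasure P] [Fintype ι]
  [MeasurableSpace ι] [MeasurableSingletonClass ι] {p : ι → ℝ}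

lemma integral_comp_eq_sum_smul {E : Type*} [NormedAddCommGroup E] [NormedSpace ℝ E]
    [CompleteSpace E] {X : Ω → ι} (hX : Measurable X)
    (hlaw : ∀ k, P.real {ω | X ω = k} = p k) (f : ι → E) :
    ∫ ω, f (X ω) ∂P = ∑ k, p k • f k := by
  rw [← integral_map hX.aemeasurable StronglyMeasurable.of_discrete.aestronglyMeasurable,
    integral_fintype Integrable.of_finite]
  simp_rw [map_measureReal_apply hX (measurableSet_singleton _)]
  exact sum_congr rfl fun k _ => by rw [← hlaw k]; rfl

theorem integral_norm_sum_comp_sq_eq {E κ : Type*} [NormedAddCommGroup E] [InnerProductSpace ℝ E]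
    [CompleteSpace E] [Fintype κ] {I : κ → Ω → ι}
    (hmeas : ∀ l, Measurable (I l)) (hindep : iIndepFun I P)
    (hlaw : ∀ l k, P.real {ω | I l ω = k} = p k) (u : ι → E) (hu : ∑ k, p k • u k = 0) :
    ∫ ω, ‖∑ l, u (I l ω)‖ ^ 2 ∂P = Fintype.card κ * ∑ k, p k * ‖u k‖ ^ 2 := by
  have hint : ∀ l m, Integrable (fun ω => inner ℝ (u (I l ω)) (u (I m ω))) P := fun l m =>
    (Integrable.of_finite (f := fun z : ι × ι => inner ℝ (u z.1) (u z.2))).comp_measurable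
      ((hmeas l).prodMk (hmeas m))
  have hdiag : ∀ l, ∫ ω, inner ℝ (u (I l ω)) (u (I l ω)) ∂P = ∑ k, p k * ‖u k‖ ^ 2 := fun l => by
    simp_rw [real_inner_self_eq_norm_sq]
    exact integral_comp_eq_sum_smul (hmeas l) (hlaw l) fun k => ‖u k‖ ^ 2
  have hoff : ∀ l m, m ≠ l → ∫ ω, inner ℝ (u (I l ω)) (u (I m ω)) ∂P = 0 := fun l m hml => by
    have hprod : ∫ ω, inner ℝ (u (I l ω)) (u (I m ω)) ∂P =
        innerSL ℝ (∫ ω, u (I l ω) ∂P) (∫ ω, u (I m ω) ∂P) :=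
      (hindep.indepFun hml.symm).integral_bilin_comp_comp (hmeas l).aemeasurable
        (hmeas m).aemeasurable Integrable.of_finite Integrable.of_finite (innerSL ℝ)
    rw [hprod, integral_comp_eq_sum_smul (hmeas l) (hlaw l), hu, map_zero, zero_apply]
  have hexpand : ∀ ω, ‖∑ l, u (I l ω)‖ ^ 2 = ∑ l, ∑ m, inner ℝ (u (I l ω)) (u (I m ω)) :=
    fun ω => by rw [← real_inner_self_eq_norm_sq, sum_inner]; simp_rw [inner_sum]
  simp_rw [hexpand]
  rw [integral_finsetSum _ fun l _ => integrable_finsetSum _ fun m _ => hint l m]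
  simp_rw [integral_finsetSum _ fun m _ => hint _ m]
  rw [sum_congr rfl fun l _ => (sum_eq_single l (fun m _ => hoff l m) (by simp)).trans (hdiag l),
    sum_const, card_univ, nsmul_eq_mul]

end Sampling

theorem stmt_6 {d n K Epochs : ℕ} {Ω : Type*} [MeasurableSpace Ω] (P : Measure Ω)
    [IsProbabilityMeasure P] (hK : 0 < K)
    (p : Fin n → ℝ) (hp : ∀ k, 0 ≤ p k) (hsum : ∑ k, p k = 1)
    (w₀ : EuclideanSpace ℝ (Fin d))
    (g : Fin n → Fin Epochs → EuclideanSpace ℝ (Fin d)) (G : ℝ)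
    (hg : ∀ k t, ‖g k t‖ ≤ G)
    (ηt : Fin Epochs → ℝ) (η₀ η : ℝ)
    (hηt0 : ∀ t, 0 ≤ ηt t) (hηt : ∀ t, ηt t ≤ η₀) (hη₀ : η₀ ≤ 2 * η)
    (v : Fin n → EuclideanSpace ℝ (Fin d))
    (hv : ∀ k, v k = w₀ - ∑ t, ηt t • g k t)
    (I : Fin K → Ω → Fin n) (hmeas : ∀ l, Measurable (I l))
    (hindep : ProbabilityTheory.iIndepFun I P)
    (hdist : ∀ l k, P {ω | I l ω = k} = ENNReal.ofReal (p k)) :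
    (∫ ω, ‖(K : ℝ)⁻¹ • ∑ l, v (I l ω) - ∑ k, p k • v k‖ ^ 2 ∂P) ≤
      4 / K * η ^ 2 * Epochs ^ 2 * G ^ 2 := by
  have hlaw : ∀ l k, P.real {ω | I l ω = k} = p k := fun l k => by
    rw [measureReal_def, hdist, ENNReal.toReal_ofReal (hp k)]
  have hdrift : ∀ k, ‖v k - w₀‖ ≤ Epochs * (2 * η * G) := fun k => by
    rw [hv, sub_sub_cancel_left, norm_neg]
    exact (norm_sum_smul_le (fun t => (Real.norm_of_nonneg (hηt0 t)).trans_le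
      ((hηt t).trans hη₀)) (hg k)).trans_eq (by rw [Fintype.card_fin])
  set vbar := ∑ k, p k • v k
  calc ∫ ω, ‖(K : ℝ)⁻¹ • ∑ l, v (I l ω) - vbar‖ ^ 2 ∂P
      = ∫ ω, (K : ℝ)⁻¹ ^ 2 * ‖∑ l, (v (I l ω) - vbar)‖ ^ 2 ∂P := by
        simp_rw [inv_natCast_smul_sum_sub hK, norm_smul, mul_pow, Real.norm_of_nonneg
          (inv_nonneg.mpr (Nat.cast_nonneg K))]
    _ = (K : ℝ)⁻¹ * ∑ k, p k * ‖v k - vbar‖ ^ 2 := by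
        rw [integral_const_mul, integral_norm_sum_comp_sq_eq hmeas hindep hlaw (fun k => v k - vbar)
          (sum_smul_sub_weighted_mean hsum v), Fintype.card_fin]
        field_simp
    _ ≤ (K : ℝ)⁻¹ * ∑ k, p k * ‖v k - w₀‖ ^ 2 := by
        gcongr (K : ℝ)⁻¹ * ?_
        exact sum_mul_norm_sub_weighted_mean_sq_le hsum v w₀
    _ ≤ (K : ℝ)⁻¹ * ∑ k, p k * (Epochs * (2 * η * G)) ^ 2 := by
        gcongr with k
        · exact hp k
        · exact hdrift k
    _ = 4 / K * η ^ 2 * Epochs ^ 2 * G ^ 2 := by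
        rw [← sum_mul, hsum]
        ring
end

section
/- Let μ > 0 and η ∈ (0, 1/μ]. For nonnegative reals a, b with a ≤ (1 - ημ) c + η² b for some c ≥ 0, and suppose c ≤ v/(r+γ) where v ≥ β² b/(βμ - 1), η = β/(r+γ), β > 1/μ, γ > 0, r ≥ 1. Then a ≤ v/(r+γ+1). -/
/-!
Write `t = r + γ`. Substituting `η = β / t` and `c ≤ v / t`, the right-hand side of the recursion
becomes `((t - 1) v - ((β μ - 1) v - β² b)) / t²`. The choice of `v` makes the subtracted term
nonnegative, and `(t - 1) / t² ≤ 1 / (t + 1)` because `(t - 1)(t + 1) = t² - 1`.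
-/

lemma sub_one_div_sq_le_one_div_add_one {t : ℝ} (ht : 0 < t) : (t - 1) / t ^ 2 ≤ 1 / (t + 1) := by
  rw [div_le_div_iff₀ (by positivity) (by linarith)]
  nlinarith

lemma one_sub_div_mul_div_add_div_sq_mul_le {μ β b v t : ℝ} (ht : 0 < t) (hv : 0 ≤ v)
    (hbv : β ^ 2 * b ≤ (β * μ - 1) * v) :
    (1 - β / t * μ) * (v / t) + (β / t) ^ 2 * b ≤ v / (t + 1) :=
  calc (1 - β / t * μ) * (v / t) + (β / t) ^ 2 * b
      = ((t - 1) * v - ((β * μ - 1) * v - β ^ 2 * b)) / t ^ 2 := by field_simp; ring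
    _ ≤ (t - 1) / t ^ 2 * v := by
      rw [div_mul_eq_mul_div]
      gcongr
      linarith
    _ ≤ 1 / (t + 1) * v := mul_le_mul_of_nonneg_right (sub_one_div_sq_le_one_div_add_one ht) hv
    _ = v / (t + 1) := one_div_mul_eq_div _ _

theorem stmt_13_general (μ η a b c v β γ : ℝ) (r : ℕ)
    (hμ : 0 < μ) (hη' : η ≤ 1 / μ)
    (hb : 0 ≤ b)
    (hrec : a ≤ (1 - η * μ) * c + η ^ 2 * b)
    (hcv : c ≤ v / (r + γ)) (hv : β ^ 2 * b / (β * μ - 1) ≤ v)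
    (hηdef : η = β / (r + γ)) (hβ : 1 / μ < β) (hγ : 0 < γ) :
    a ≤ v / (r + γ + 1) := by
  have ht : 0 < (r : ℝ) + γ := by positivity
  have hβμ : 0 < β * μ - 1 := sub_pos.2 ((div_lt_iff₀ hμ).mp hβ)
  have hv0 : 0 ≤ v := (div_nonneg (by positivity) hβμ.le).trans hv
  have hbv : β ^ 2 * b ≤ (β * μ - 1) * v := ((div_le_iff₀ hβμ).mp hv).trans_eq (mul_comm _ _)
  have hημ : 0 ≤ 1 - η * μ := sub_nonneg.2 ((le_div_iff₀ hμ).mp hη')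
  calc a ≤ (1 - η * μ) * c + η ^ 2 * b := hrec
    _ ≤ (1 - η * μ) * (v / (r + γ)) + η ^ 2 * b := by gcongr
    _ ≤ v / (r + γ + 1) := by
      rw [hηdef]; exact one_sub_div_mul_div_add_div_sq_mul_le ht hv0 hbv

theorem stmt_13 (μ η a b c v β γ : ℝ) (r : ℕ)
    (hμ : 0 < μ) (hη : 0 < η) (hη' : η ≤ 1 / μ)
    (ha : 0 ≤ a) (hb : 0 ≤ b) (hc : 0 ≤ c)
    (hrec : a ≤ (1 - η * μ) * c + η ^ 2 * b)
    (hcv : c ≤ v / (r + γ)) (hv : β ^ 2 * b / (β * μ - 1) ≤ v)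
    (hηdef : η = β / (r + γ)) (hβ : 1 / μ < β) (hγ : 0 < γ) (hr : 1 ≤ r) :
    a ≤ v / (r + γ + 1) :=
  stmt_13_general μ η a b c v β γ r hμ hη' hb hrec hcv hv hηdef hβ hγ
end
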